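/- arXiv:1601.02555 — 5 statements merged into one kernel-verified Lean document; each statement's English description precedes it below -/
import Mathlib

section
/- Let R be a UFD. A polynomial p(x_1,...,x_n) ∈ R[x_1,...,x_n] satisfies the property that p(x_1^{t_1},...,x_n^{t_n}) is irreducible for every choice of positive integers t_1,...,t_n if and only if p(x_1^k,...,x_n^k) is irreducible for every positive integer k. -/
open MvPolynomial

/-!
Write `φ_s` for the substitution `xᵢ ↦ xᵢ^{sᵢ}`. For positive `sᵢ` it maps the coefficient of
`x^d` to that of `x^{s•d}` injectively, so by the description of units of `R[x]` (constant
term a unit, all other coefficients nilpotent) it reflects units, and hence reflects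
irreducibility. Given positive `tᵢ`, put `L = ∏ tᵢ` and `sᵢ = L / tᵢ`; then
`φ_s (p(x^t)) = p(x^L)`, so irreducibility of `p(x^L)` forces that of `p(x^t)`.
-/

namespace Finsupp

theorem pointwise_smul_injective {σ : Type*} {s : σ → ℕ} (hs : ∀ i, 0 < s i) :
    Function.Injective fun d : σ →₀ ℕ => s • d := by
  intro d d' h
  ext i
  have hi := DFunLike.congr_fun h i
  simp only [coe_pointwise_smul, smul_eq_mul] at hi
  exact Nat.eq_of_mul_eq_mul_left (hs i) hi

end Finsupp

namespace MvPolynomial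

variable {σ R : Type*}

section CommSemiring

variable [CommSemiring R]

theorem aeval_X_pow_monomial (s : σ → ℕ) (d : σ →₀ ℕ) (r : R) :
    aeval (fun i => (X i : MvPolynomial σ R) ^ s i) (monomial d r) = monomial (s • d) r := by
  rw [aeval_monomial, monomial_eq, algebraMap_eq]
  congr 1
  rw [Finsupp.prod_of_support_subset (s • d) (s := d.support) ?_ _ fun i _ => pow_zero _]
  · refine Finset.prod_congr rfl fun i _ => ?_
    simp [← pow_mul]
  · intro i
    simp +contextual

theorem coeff_pointwise_smul_aeval_X_pow {s : σ → ℕ} (hs : ∀ i, 0 < s i) (d : σ →₀ ℕ)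
    (q : MvPolynomial σ R) :
    coeff (s • d) (aeval (fun i => (X i : MvPolynomial σ R) ^ s i) q) = coeff d q := by
  classical
  induction q using MvPolynomial.induction_on' with
  | monomial d' r =>
    simp only [aeval_X_pow_monomial, coeff_monomial, (Finsupp.pointwise_smul_injective hs).eq_iff]
  | add f g hf hg => rw [map_add, coeff_add, coeff_add, hf, hg]

theorem aeval_X_pow_aeval_X_pow (s t : σ → ℕ) (p : MvPolynomial σ R) :
    aeval (fun i => (X i : MvPolynomial σ R) ^ s i)
        (aeval (fun i => (X i : MvPolynomial σ R) ^ t i) p) =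
      aeval (fun i => (X i : MvPolynomial σ R) ^ (t i * s i)) p := by
  rw [← AlgHom.comp_apply, comp_aeval]
  congr 2
  funext i
  rw [map_pow, aeval_X, ← pow_mul, mul_comm]

end CommSemiring

theorem isLocalHom_aeval_X_pow [CommRing R] {s : σ → ℕ} (hs : ∀ i, 0 < s i) :
    IsLocalHom (aeval (R := R) fun i => (X i : MvPolynomial σ R) ^ s i) where
  map_nonunit b hb := by
    rw [isUnit_iff] at hb ⊢
    obtain ⟨hunit, hnil⟩ := hb
    refine ⟨?_, fun d hd => ?_⟩
    · have h0 := coeff_pointwise_smul_aeval_X_pow hs 0 b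
      rw [smul_zero] at h0
      rwa [← h0]
    · rw [← coeff_pointwise_smul_aeval_X_pow hs d]
      exact hnil _ fun h => hd (Finsupp.pointwise_smul_injective hs (h.trans (smul_zero s).symm))

end MvPolynomial

theorem stmt1_general {R : Type*} [CommRing R] {n : ℕ}
    (p : MvPolynomial (Fin n) R) :
    (∀ t : Fin n → ℕ, (∀ i, 0 < t i) →
        Irreducible (aeval (fun i => (X i : MvPolynomial (Fin n) R) ^ t i) p)) ↔
      (∀ k : ℕ, 0 < k →
        Irreducible (aeval (fun i => (X i : MvPolynomial (Fin n) R) ^ k) p)) := by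
  refine ⟨fun h k hk => h (fun _ => k) fun _ => hk, fun h t ht => ?_⟩
  set L := ∏ i, t i
  have hL : 0 < L := Finset.prod_pos fun i _ => ht i
  have hdvd (i : Fin n) : t i ∣ L := Finset.dvd_prod_of_mem t (Finset.mem_univ i)
  have hs (i : Fin n) : 0 < L / t i := Nat.div_pos (Nat.le_of_dvd hL (hdvd i)) (ht i)
  have hcomp : aeval (fun i => (X i : MvPolynomial (Fin n) R) ^ (L / t i))
      (aeval (fun i => (X i : MvPolynomial (Fin n) R) ^ t i) p) =
        aeval (fun i => (X i : MvPolynomial (Fin n) R) ^ L) p := by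
    rw [aeval_X_pow_aeval_X_pow]
    congr 2
    funext i
    rw [Nat.mul_div_cancel' (hdvd i)]
  have := isLocalHom_aeval_X_pow (R := R) hs
  exact (hcomp ▸ h L hL).of_map

/-- Over a UFD `R`, a polynomial `p ∈ R[x₁,…,xₙ]` has the property that
`p(x₁^{t₁},…,xₙ^{tₙ})` is irreducible for every choice of positive integers `tᵢ` if and
only if `p(x₁^k,…,xₙ^k)` is irreducible for every positive integer `k`. -/
theorem stmt1 {R : Type*} [CommRing R] [IsDomain R] [UniqueFactorizationMonoid R] {n : ℕ}
    (p : MvPolynomial (Fin n) R) :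
    (∀ t : Fin n → ℕ, (∀ i, 0 < t i) →
        Irreducible (aeval (fun i => (X i : MvPolynomial (Fin n) R) ^ t i) p)) ↔
      (∀ k : ℕ, 0 < k →
        Irreducible (aeval (fun i => (X i : MvPolynomial (Fin n) R) ^ k) p)) :=
  stmt1_general p
end

section
/- Let P be a homogeneous polynomial in at least 3 variables x_0,...,x_n (n ≥ 2) over an algebraically closed field of characteristic 0. If the system x_i · ∂P/∂x_i = 0 for i = 0,...,n has only the trivial solution, then P(x_0^k,...,x_n^k) is irreducible for every positive integer k. -/
open MvPolynomial

/-!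
Write `Q = P(x₀^k, …, xₙ^k)`. By the chain rule `∂Q/∂xᵢ (x) = k xᵢ^(k-1) ∂P/∂xᵢ (x^k)`, so after
multiplying by `xᵢ` a common zero `x` of the partials of `Q` makes `x^k` a solution of the system
`yᵢ ∂P/∂yᵢ (y) = 0`; hence `x = 0`, i.e. `Q` is smooth.

A smooth form `Q` in at least three variables is irreducible. If `Q = A * B` with non-units `A`,
`B`, then `Q` is also the product of the top homogeneous components of `A` and `B`, which are
forms of positive degree. Two such forms in at least three variables have a common zero `x ≠ 0`:
otherwise the maximal ideal of the origin would be minimal over the ideal they generate, and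
Krull's height theorem would bound its height by `2`, while its height is the number of variables
(it has the same height as every other maximal ideal, all of them being translates of it). By the
product rule all partials of `Q` vanish at `x`, a contradiction.
-/

namespace MvPolynomial

section CommSemiring

variable {σ R : Type*} [CommSemiring R]

section
attribute [local instance] gradedAlgebra

lemma IsHomogeneous.homogeneousComponent_mul_of_le {p : MvPolynomial σ R} {i n : ℕ}
    (hp : p.IsHomogeneous i) (q : MvPolynomial σ R) (h : i ≤ n) :
    homogeneousComponent n (p * q) = p * homogeneousComponent (n - i) q := by
  rw [← decomposition.decompose'_apply, ← decomposition.decompose'_apply]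
  exact DirectSum.coe_decompose_mul_of_left_mem_of_le (homogeneousSubmodule σ R) hp h

end

lemma homogeneousComponent_totalDegree_add_mul (p q : MvPolynomial σ R) :
    homogeneousComponent (p.totalDegree + q.totalDegree) (p * q) =
      homogeneousComponent p.totalDegree p * homogeneousComponent q.totalDegree q := by
  conv_lhs => enter [2, 1]; rw [← sum_homogeneousComponent p]
  rw [Finset.sum_mul, map_sum,
    Finset.sum_eq_single_of_mem p.totalDegree (Finset.self_mem_range_succ _)]
  · rw [(homogeneousComponent_isHomogeneous _ _).homogeneousComponent_mul_of_le _
      (Nat.le_add_right _ _), Nat.add_sub_cancel_left]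
  · intro i hi hne
    have hi : i < p.totalDegree := by
      rw [Finset.mem_range] at hi
      omega
    rw [(homogeneousComponent_isHomogeneous i p).homogeneousComponent_mul_of_le _ (by omega),
      homogeneousComponent_eq_zero (φ := q) _ (by omega), mul_zero]

lemma IsHomogeneous.homogeneousComponent_totalDegree_mul [IsDomain R] {p q : MvPolynomial σ R}
    {n : ℕ} (h : (p * q).IsHomogeneous n) :
    homogeneousComponent p.totalDegree p * homogeneousComponent q.totalDegree q = p * q := by
  rcases eq_or_ne p 0 with rfl | hp
  · simp
  rcases eq_or_ne q 0 with rfl | hq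
  · simp
  rw [← homogeneousComponent_totalDegree_add_mul, ← totalDegree_mul_of_isDomain hp hq,
    h.totalDegree (mul_ne_zero hp hq), homogeneousComponent_eq_self h]

lemma IsHomogeneous.eval_zero {p : MvPolynomial σ R} {n : ℕ} (hp : p.IsHomogeneous n)
    (hn : n ≠ 0) : eval 0 p = 0 := by
  rw [MvPolynomial.eval_zero, constantCoeff_eq]
  exact hp.coeff_eq_zero (by simpa using hn.symm)

lemma pderiv_expand (k : ℕ) (i : σ) (P : MvPolynomial σ R) :
    pderiv i (expand k P) = (k : MvPolynomial σ R) * X i ^ (k - 1) * expand k (pderiv i P) := by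
  induction P using MvPolynomial.induction_on with
  | C a => simp
  | add p q hp hq => simp only [map_add, hp, hq, mul_add]
  | mul_X p j hp =>
    rw [map_mul, expand_X, pderiv_mul, hp, pderiv_pow, pderiv_mul, map_add, map_mul, map_mul,
      expand_X]
    by_cases hij : i = j
    · subst hij
      simp only [pderiv_X_self, map_one]
      ring
    · simp only [pderiv_X_of_ne (Ne.symm hij), map_zero]
      ring

end CommSemiring

section CommonZeros

variable {σ K : Type*} [Field K]

noncomputable def translate (c : σ → K) : MvPolynomial σ K ≃ₐ[K] MvPolynomial σ K :=
  AlgEquiv.ofAlgHom (aeval fun i => X i + C (c i)) (aeval fun i => X i - C (c i))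
    (by ext i; simp) (by ext i; simp)

lemma comap_translate_vanishingIdeal_singleton (c x : σ → K) :
    (vanishingIdeal K {x}).comap (translate c) = vanishingIdeal K {x + c} := by
  ext p
  simp only [Ideal.mem_comap, mem_vanishingIdeal_singleton_iff, translate,
    AlgEquiv.ofAlgHom_apply]
  rw [← AlgHom.comp_apply, comp_aeval]
  congr!
  simp

lemma height_vanishingIdeal_singleton_eq (x y : σ → K) :
    (vanishingIdeal K {x}).height = (vanishingIdeal K {y}).height := by
  have h := comap_translate_vanishingIdeal_singleton (x - y) y
  rw [add_sub_cancel] at h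
  rw [← h]
  exact RingEquiv.height_comap (translate (x - y)).toRingEquiv _

variable [Fintype σ] [IsAlgClosed K]

lemma height_vanishingIdeal_singleton_eq_card (x : σ → K) :
    (vanishingIdeal K {x}).height = Fintype.card σ := by
  have hdim : ringKrullDim (MvPolynomial σ K) = Fintype.card σ := by
    rw [ringKrullDim_of_isNoetherianRing, ringKrullDim_eq_zero_of_field,
      Nat.card_eq_fintype_card, zero_add]
  apply le_antisymm
  · have := Ideal.height_le_ringKrullDim_of_ne_top
      (Ideal.IsPrime.ne_top' (I := vanishingIdeal K {x}))
    rw [hdim] at this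
    exact_mod_cast this
  · have : ringKrullDim (MvPolynomial σ K) ≤ (vanishingIdeal K {x}).height := by
      rw [ringKrullDim_le_iff_isMaximal_height_le]
      intro m hm
      obtain ⟨y, rfl⟩ := isMaximal_iff_eq_vanishingIdeal_singleton.1 hm
      rw [height_vanishingIdeal_singleton_eq y x]
    rw [hdim] at this
    exact_mod_cast this

theorem exists_ne_zero_forall_eval_eq_zero_of_isHomogeneous (s : Finset (MvPolynomial σ K))
    (hs : s.card < Fintype.card σ) (hhom : ∀ p ∈ s, ∃ n ≠ 0, p.IsHomogeneous n) :
    ∃ x ≠ 0, ∀ p ∈ s, eval x p = 0 := by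
  by_contra! h
  have hlocus : zeroLocus K (Ideal.span (s : Set (MvPolynomial σ K))) = {0} := by
    refine le_antisymm (fun x hx => ?_) ?_
    · by_contra hx0
      obtain ⟨p, hp, hpx⟩ := h x hx0
      exact hpx (hx p (Ideal.subset_span hp))
    · rw [le_zeroLocus_iff_le_vanishingIdeal, Ideal.span_le]
      intro p hp
      obtain ⟨n, hn, hpn⟩ := hhom p hp
      simpa using hpn.eval_zero hn
  have hmin : vanishingIdeal K {(0 : σ → K)} ∈
      (Ideal.span (s : Set (MvPolynomial σ K))).minimalPrimes := by
    rw [← Ideal.radical_minimalPrimes, ← vanishingIdeal_zeroLocus_eq_radical (K := K), hlocus,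
      Ideal.minimalPrimes_eq_subsingleton_self]
    rfl
  have hheight := Ideal.height_le_card_of_mem_minimalPrimes_span_finset hmin
  rw [height_vanishingIdeal_singleton_eq_card] at hheight
  exact absurd (by exact_mod_cast hheight) hs.not_ge

end CommonZeros

section Smooth

variable {σ K : Type*} [Field K]

/-- For a form `Q` in characteristic zero this says that the projective hypersurface `Q = 0` is
nonsingular: by Euler's formula the common zeros of the partials lie on it. -/
def IsSmooth (Q : MvPolynomial σ K) : Prop :=
  ∀ x : σ → K, (∀ i, eval x (pderiv i Q) = 0) → x = 0

lemma IsSmooth.totalDegree_ne_zero [Nonempty σ] {Q : MvPolynomial σ K} (hQ : Q.IsSmooth) :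
    Q.totalDegree ≠ 0 := by
  intro h
  rw [totalDegree_eq_zero_iff_eq_C] at h
  have h1 := hQ (fun _ => 1) fun i => by rw [h, pderiv_C, map_zero]
  exact one_ne_zero (congrFun h1 (Classical.arbitrary σ))

lemma totalDegree_ne_zero_of_not_isUnit {A : MvPolynomial σ K} (hA : ¬IsUnit A) (hA0 : A ≠ 0) :
    A.totalDegree ≠ 0 := by
  intro h
  rw [totalDegree_eq_zero_iff_eq_C] at h
  rw [h, ne_eq, C_eq_zero] at hA0
  exact hA (h ▸ (isUnit_iff_ne_zero.2 hA0).map C)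

theorem IsSmooth.irreducible [Fintype σ] [IsAlgClosed K] (hσ : 3 ≤ Fintype.card σ)
    {Q : MvPolynomial σ K} {e : ℕ} (hQ : Q.IsHomogeneous e) (hs : Q.IsSmooth) :
    Irreducible Q := by
  classical
  have : Nonempty σ := Fintype.card_pos_iff.1 (by omega)
  have hdeg := hs.totalDegree_ne_zero
  refine ⟨fun hu => hdeg (isUnit_iff_totalDegree_of_isReduced.1 hu).2, fun A B hAB => ?_⟩
  by_contra! ⟨hA, hB⟩
  have hQ0 : Q ≠ 0 := by rintro rfl; simp at hdeg
  have hA0 : A ≠ 0 := by rintro rfl; simp [hAB] at hQ0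
  have hB0 : B ≠ 0 := by rintro rfl; simp [hAB] at hQ0
  set A' := homogeneousComponent A.totalDegree A
  set B' := homogeneousComponent B.totalDegree B
  have hQAB : Q = A' * B' := by
    rw [hAB] at hQ ⊢
    exact hQ.homogeneousComponent_totalDegree_mul.symm
  obtain ⟨x, hx0, hx⟩ := exists_ne_zero_forall_eval_eq_zero_of_isHomogeneous {A', B'}
    (Finset.card_le_two.trans_lt (by omega))
    (by
      simp only [Finset.mem_insert, Finset.mem_singleton, forall_eq_or_imp, forall_eq]
      exact ⟨⟨_, totalDegree_ne_zero_of_not_isUnit hA hA0, homogeneousComponent_isHomogeneous _ _⟩,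
        ⟨_, totalDegree_ne_zero_of_not_isUnit hB hB0, homogeneousComponent_isHomogeneous _ _⟩⟩)
  refine hx0 (hs x fun i => ?_)
  rw [hQAB, pderiv_mul, map_add, map_mul, map_mul, hx A' (by simp), hx B' (by simp)]
  ring

theorem isSmooth_expand {P : MvPolynomial σ K}
    (hP : ∀ x : σ → K, (∀ i, x i * eval x (pderiv i P) = 0) → x = 0) {k : ℕ}
    (hk : (k : K) ≠ 0) : (expand k P).IsSmooth := by
  obtain ⟨m, rfl⟩ := Nat.exists_eq_succ_of_ne_zero (fun h : k = 0 => hk (by simp [h]))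
  rw [Nat.cast_succ] at hk
  intro x hx
  have hxk : x ^ (m + 1) = 0 := hP _ fun i => by
    have h : x i ^ m * eval (x ^ (m + 1)) (pderiv i P) = 0 := by
      simpa [pderiv_expand, eval_expand, hk, mul_assoc] using hx i
    rw [Pi.pow_apply, pow_succ', mul_assoc, h, mul_zero]
  funext i
  exact (pow_eq_zero_iff m.succ_ne_zero).1 (congrFun hxk i)

end Smooth

end MvPolynomial

/-- Let `P` be a homogeneous polynomial in `n+1 ≥ 3` variables over an
algebraically closed field of characteristic zero.  If the system `xᵢ · ∂P/∂xᵢ = 0`,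
`i = 0,…,n`, has only the trivial solution, then `P(x₀^k,…,xₙ^k)` is irreducible for every
positive integer `k`. -/
theorem stmt6 {K : Type*} [Field K] [IsAlgClosed K] [CharZero K] {n d : ℕ} (hn : 2 ≤ n)
    (P : MvPolynomial (Fin (n + 1)) K) (hhom : P.IsHomogeneous d)
    (heuler : ∀ x : Fin (n + 1) → K, (∀ i, x i * eval x (pderiv i P) = 0) → x = 0) :
    ∀ k : ℕ, 0 < k →
      Irreducible (aeval (fun j => (X j : MvPolynomial (Fin (n + 1)) K) ^ k) P) := by
  intro k hk
  change Irreducible (expand k P)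
  have hQ : (expand k P).IsHomogeneous (k * d) := hhom.aeval _ fun i => isHomogeneous_X_pow i k
  exact (isSmooth_expand heuler (Nat.cast_ne_zero.2 hk.ne')).irreducible
    (by rw [Fintype.card_fin]; omega) hQ
end

section
/- Every member of the family F_1' = { 1 - Σ_{i=1}^{2n} (-1)^i k_i x_i : all k_i ∈ ℤ nonzero } of affine-linear polynomials in 2n ≥ 2 variables is strongly irreducible: for all positive integers t_1,...,t_{2n}, the polynomial 1 - Σ (-1)^i k_i x_i^{t_i} is irreducible in ℤ[x_1,...,x_{2n}]. -/
/-!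
Let `f = 1 + ∑ cᵢ xᵢ ^ tᵢ`. If `q` is prime and `q² ∣ f`, then `q` divides
`∂f/∂xⱼ = cⱼ tⱼ xⱼ ^ (tⱼ - 1)`, so `q` divides the constant `cⱼ tⱼ` or is associated to `xⱼ`;
both are impossible because `f(0) = 1`. Hence every prime factor of `f` divides it exactly once.
With at least two variables, write `f = B + c₀ x₀ ^ t₀` with `B` of the same shape in the
remaining variables: Eisenstein's criterion in `x₀`, at a prime factor of `B`, makes `f` irreducible.
-/

open MvPolynomial

theorem Derivation.dvd_apply_of_mul_self_dvd {R A : Type*} [CommRing R] [CommRing A] [Algebra R A]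
    (D : Derivation R A A) {q f : A} (h : q * q ∣ f) : q ∣ D f := by
  obtain ⟨g, rfl⟩ := h
  rw [D.leibniz, D.leibniz, smul_eq_mul, smul_eq_mul, smul_eq_mul]
  exact dvd_add (dvd_mul_of_dvd_left (dvd_mul_right q q) _)
    (dvd_mul_of_dvd_right (dvd_add (dvd_mul_right q _) (dvd_mul_right q _)) _)

theorem Polynomial.irreducible_C_add_C_mul_X_pow {R : Type*} [CommRing R] [IsDomain R]
    {a b q : R} (hq : Prime q) (hqb : q ∣ b) (hqqb : ¬ q * q ∣ b)
    (hab : ∀ r, r ∣ a → r ∣ b → IsUnit r) {t : ℕ} (ht : 0 < t) :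
    Irreducible (Polynomial.C b + Polynomial.C a * Polynomial.X ^ t) := by
  have ha : a ≠ 0 := by
    rintro rfl
    exact hq.not_isUnit (hab q (dvd_zero q) hqb)
  have hcoeff (n : ℕ) : (Polynomial.C b + Polynomial.C a * Polynomial.X ^ t).coeff n =
      (if n = 0 then b else 0) + (if n = t then a else 0) := by
    rw [Polynomial.coeff_add, Polynomial.coeff_C, Polynomial.coeff_C_mul_X_pow]
  have hdeg : (Polynomial.C b + Polynomial.C a * Polynomial.X ^ t).natDegree = t := by
    rw [Polynomial.natDegree_add_eq_right_of_natDegree_lt] <;>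
      simp [Polynomial.natDegree_C_mul_X_pow t a ha, ht]
  refine Polynomial.IsEisensteinAt.irreducible (𝓟 := Ideal.span {q}) ⟨?_, ?_, ?_⟩
    ((Ideal.span_singleton_prime hq.ne_zero).mpr hq) ?_ (by rwa [hdeg])
  · rw [Polynomial.leadingCoeff, hdeg, hcoeff, Ideal.mem_span_singleton]
    simpa [ht.ne'] using fun hqa => hq.not_isUnit (hab q hqa hqb)
  · intro n hn
    rw [hdeg] at hn
    rw [hcoeff, if_neg hn.ne, add_zero, Ideal.mem_span_singleton]
    split_ifs <;> simp [hqb]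
  · rw [hcoeff, if_pos rfl, if_neg ht.ne, add_zero, Ideal.span_singleton_pow,
      Ideal.mem_span_singleton, sq]
    exact hqqb
  · intro r hr
    rw [Polynomial.C_dvd_iff_dvd_coeff] at hr
    exact hab r (by simpa [hcoeff, ht.ne'] using hr t) (by simpa [hcoeff, ht.ne] using hr 0)

namespace MvPolynomial

variable {R σ : Type*} [CommRing R]

theorem isUnit_of_dvd_C_of_dvd [IsDomain R] {a : R} (ha : a ≠ 0) {f r : MvPolynomial σ R}
    (hf : constantCoeff f = 1) (hra : r ∣ C a) (hrf : r ∣ f) : IsUnit r := by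
  obtain ⟨b, -, rfl⟩ := (dvd_C_iff_exists ha).mp hra
  obtain ⟨g, hg⟩ := hrf
  refine (isUnit_of_dvd_one ⟨constantCoeff g, ?_⟩).map C
  rw [← hf, hg, map_mul, constantCoeff_C]

variable [Fintype σ]

noncomputable def oneAddDiagonal (c : σ → R) (t : σ → ℕ) : MvPolynomial σ R :=
  1 + ∑ i, C (c i) * X i ^ t i

variable {c : σ → R} {t : σ → ℕ}

theorem constantCoeff_oneAddDiagonal (ht : ∀ i, 0 < t i) :
    constantCoeff (oneAddDiagonal c t) = 1 := by
  simp [oneAddDiagonal, fun i => (ht i).ne']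

theorem pderiv_oneAddDiagonal (j : σ) :
    pderiv j (oneAddDiagonal c t) = C (c j * t j) * X j ^ (t j - 1) := by
  classical
  rw [oneAddDiagonal, map_add, (pderiv j).map_one_eq_zero, zero_add, map_sum,
    Finset.sum_eq_single j]
  · simp [mul_comm, mul_left_comm, mul_assoc]
  · intro i _ hij
    rw [pderiv_C_mul, pderiv_pow, pderiv_X_of_ne hij, mul_zero, mul_zero]
  · simp

theorem rename_oneAddDiagonal {τ : Type*} [Fintype τ] (e : σ ≃ τ) :
    rename e (oneAddDiagonal c t) = oneAddDiagonal (c ∘ e.symm) (t ∘ e.symm) := by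
  simp only [oneAddDiagonal, map_add, map_one, map_sum, map_mul, map_pow, rename_C, rename_X]
  congr 1
  exact Fintype.sum_equiv e _ _ fun i => by simp

theorem finSuccEquiv_oneAddDiagonal {n : ℕ} (c : Fin (n + 1) → R) (t : Fin (n + 1) → ℕ) :
    finSuccEquiv R n (oneAddDiagonal c t) =
      Polynomial.C (oneAddDiagonal (c ∘ Fin.succ) (t ∘ Fin.succ)) +
        Polynomial.C (C (c 0)) * Polynomial.X ^ t 0 := by
  have hC (a : R) : finSuccEquiv R n (C a) = Polynomial.C (C a) := (finSuccEquiv R n).commutes a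
  simp only [oneAddDiagonal, map_add, map_one, map_sum, map_mul, map_pow, Fin.sum_univ_succ,
    finSuccEquiv_X_zero, finSuccEquiv_X_succ, hC, Function.comp_apply]
  ring

variable [IsDomain R]

theorem not_mul_self_dvd_oneAddDiagonal (ht : ∀ i, 0 < t i) {j : σ} (hj : c j * t j ≠ 0)
    {q : MvPolynomial σ R} (hq : Prime q) : ¬ q * q ∣ oneAddDiagonal c t := by
  intro hqq
  have hqf : q ∣ oneAddDiagonal c t := dvd_trans (dvd_mul_right q q) hqq
  have hq' := (pderiv j).dvd_apply_of_mul_self_dvd hqq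
  rw [pderiv_oneAddDiagonal] at hq'
  rcases hq.dvd_or_dvd hq' with hqC | hqX
  · exact hq.not_isUnit (isUnit_of_dvd_C_of_dvd hj (constantCoeff_oneAddDiagonal ht) hqC hqf)
  · have hXq : X j ∣ q := (hq.associated_of_dvd X_prime (hq.dvd_of_dvd_pow hqX)).symm.dvd
    obtain ⟨g, hg⟩ := hXq.trans hqf
    simpa [constantCoeff_oneAddDiagonal ht] using congrArg constantCoeff hg

theorem not_isUnit_oneAddDiagonal {j : σ} (hj : c j * t j ≠ 0) :
    ¬ IsUnit (oneAddDiagonal c t) := by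
  intro hu
  obtain ⟨b, -, hb⟩ := (dvd_C_iff_exists one_ne_zero).mp hu.dvd
  have := pderiv_oneAddDiagonal (c := c) (t := t) j
  rw [hb, pderiv_C] at this
  exact mul_ne_zero (C_ne_zero.mpr hj) (pow_ne_zero _ (X_ne_zero j)) this.symm

theorem exists_prime_dvd_not_mul_self_dvd_oneAddDiagonal [UniqueFactorizationMonoid R]
    (ht : ∀ i, 0 < t i) {j : σ} (hj : c j * t j ≠ 0) :
    ∃ q, Prime q ∧ q ∣ oneAddDiagonal c t ∧ ¬ q * q ∣ oneAddDiagonal c t := by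
  have hne : oneAddDiagonal c t ≠ 0 := fun h => by
    simpa [h] using constantCoeff_oneAddDiagonal (c := c) ht
  obtain ⟨q, hq, hqf⟩ :=
    WfDvdMonoid.exists_irreducible_factor (not_isUnit_oneAddDiagonal hj) hne
  exact ⟨q, hq.prime, hqf, not_mul_self_dvd_oneAddDiagonal ht hj hq.prime⟩

theorem irreducible_oneAddDiagonal_fin [UniqueFactorizationMonoid R] {n : ℕ}
    {c : Fin (n + 2) → R} {t : Fin (n + 2) → ℕ} (hct : ∀ i, c i * t i ≠ 0) :
    Irreducible (oneAddDiagonal c t) := by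
  have ht (i) : 0 < t i := Nat.pos_of_ne_zero fun h => hct i (by simp [h])
  obtain ⟨q, hq, hqB, hqqB⟩ := exists_prime_dvd_not_mul_self_dvd_oneAddDiagonal
    (c := c ∘ Fin.succ) (t := t ∘ Fin.succ) (fun i => ht i.succ) (j := 0) (hct 1)
  rw [← MulEquiv.irreducible_iff (finSuccEquiv R (n + 1)), finSuccEquiv_oneAddDiagonal]
  refine Polynomial.irreducible_C_add_C_mul_X_pow hq hqB hqqB (fun r hra hrB => ?_) (ht 0)
  exact isUnit_of_dvd_C_of_dvd (left_ne_zero_of_mul (hct 0))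
    (constantCoeff_oneAddDiagonal fun i => ht i.succ) hra hrB

theorem irreducible_oneAddDiagonal [UniqueFactorizationMonoid R] (hσ : 2 ≤ Fintype.card σ)
    (hct : ∀ i, c i * t i ≠ 0) : Irreducible (oneAddDiagonal c t) := by
  obtain ⟨n, hn⟩ : ∃ n, Fintype.card σ = n + 2 := ⟨Fintype.card σ - 2, by omega⟩
  let e : σ ≃ Fin (n + 2) := (Fintype.equivFin σ).trans (finCongr hn)
  rw [← MulEquiv.irreducible_iff (renameEquiv R e), renameEquiv_apply, rename_oneAddDiagonal]
  exact irreducible_oneAddDiagonal_fin fun i => hct _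

end MvPolynomial

/-- Every member of the family
`F₁' = { 1 - ∑_{i=1}^{2n} (-1)^i kᵢ xᵢ : all kᵢ ∈ ℤ nonzero }` of affine-linear
polynomials in `2n ≥ 2` variables is strongly irreducible: for all positive integers
`t₁,…,t_{2n}` the polynomial `1 - ∑ (-1)^i kᵢ xᵢ^{tᵢ}` is irreducible in
`ℤ[x₁,…,x_{2n}]`. -/
theorem stmt13 {n : ℕ} (hn : 0 < n) (k : Fin (2 * n) → ℤ) (hk : ∀ i, k i ≠ 0) :
    ∀ t : Fin (2 * n) → ℕ, (∀ i, 0 < t i) →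
      Irreducible ((1 : MvPolynomial (Fin (2 * n)) ℤ) -
        ∑ i : Fin (2 * n), C ((-1) ^ ((i : ℕ) + 1) * k i) * X i ^ t i) := by
  intro t ht
  have hsign : (1 : MvPolynomial (Fin (2 * n)) ℤ) -
      ∑ i : Fin (2 * n), C ((-1) ^ ((i : ℕ) + 1) * k i) * X i ^ t i =
        oneAddDiagonal (fun i : Fin (2 * n) => (-1) ^ (i : ℕ) * k i) t := by
    simp [oneAddDiagonal, pow_succ, sub_eq_add_neg]
  rw [hsign]
  refine irreducible_oneAddDiagonal (by rw [Fintype.card_fin]; omega) fun i => ?_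
  exact mul_ne_zero (mul_ne_zero (pow_ne_zero _ (by norm_num)) (hk i))
    (Nat.cast_ne_zero.mpr (ht i).ne')
end

section
/- Let Λ be a UFD with involution f ↦ f̄, K its field of fractions, and M a Λ-module with a sesquilinear form Bℓ : M × M → K/Λ (linear over Λ in the first variable, conjugate-linear in the second, with Bℓ(y,x) = conjugate of Bℓ(x,y)). Suppose M is annihilated by Δ = p·p̄ where p is irreducible and p, p̄ are coprime in Λ, and suppose Bℓ is nontrivial. Then there exists η ∈ M with Bℓ(η, η) ≠ 0. -/
/-- Let `Λ` be a UFD with ring involution `f ↦ conj f`, `K` its field of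
fractions, and `M` a `Λ`-module carrying a Hermitian sesquilinear form
`B : M × M → K/Λ` (the quotient of `K` by the image of `Λ`), meaning: `B` is additive and
`Λ`-linear in the first variable, additive and conjugate-linear in the second, and
`B y x = σ (B x y)` where `σ` is the conjugation induced on `K/Λ`.  If `M` is annihilated
by `Δ = p * conj p` with `p` irreducible and `p, conj p` coprime, and `B` is nontrivial,
then there is `η ∈ M` with `B η η ≠ 0`. -/
theorem stmt15 {Λ : Type*} [CommRing Λ] [IsDomain Λ] [UniqueFactorizationMonoid Λ]
    (conj : Λ →+* Λ) (hinv : ∀ f, conj (conj f) = f)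
    {M : Type*} [AddCommGroup M] [Module Λ M]
    (Q : Type*) [AddCommGroup Q] [Module Λ Q]
    (π : FractionRing Λ →ₗ[Λ] Q) (hπsurj : Function.Surjective π)
    (hπker : LinearMap.ker π = LinearMap.range (Algebra.linearMap Λ (FractionRing Λ)))
    (σ : Q →+ Q) (hσ : ∀ (c : Λ) (x : Q), σ (c • x) = conj c • σ x)
    (B : M → M → Q)
    (haddl : ∀ x x' y, B (x + x') y = B x y + B x' y)
    (haddr : ∀ x y y', B x (y + y') = B x y + B x y')
    (hsmull : ∀ (c : Λ) x y, B (c • x) y = c • B x y)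
    (hsmulr : ∀ (c : Λ) x y, B x (c • y) = conj c • B x y)
    (hherm : ∀ x y, B y x = σ (B x y))
    (p : Λ) (hp : Irreducible p) (hcop : IsRelPrime p (conj p))
    (hann : ∀ x : M, (p * conj p) • x = 0)
    (hnontriv : ∃ e₁ e₂ : M, B e₁ e₂ ≠ 0) :
    ∃ η : M, B η η ≠ 0 := by
  classical
  obtain ⟨e₁, e₂, hy⟩ := hnontriv
  by_contra hcon
  push_neg at hcon
  have h11 : B e₁ e₁ = 0 := hcon e₁
  have h22 : B e₂ e₂ = 0 := hcon e₂
  set cp := conj p with hcp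
  set y := B e₁ e₂ with hydef
  -- B 0 x = 0
  have hB0 : ∀ x : M, B (0 : M) x = 0 := by
    intro x
    have h := haddl 0 0 x
    rw [add_zero] at h
    exact add_eq_right.mp h.symm
  -- Δ • y = 0
  have hΔ : (p * cp) • y = 0 := by
    have := hsmull (p * cp) e₁ e₂
    rw [hann e₁, hB0] at this
    exact this.symm
  -- B e₂ e₁ = -y
  have h21 : B e₂ e₁ = -y := by
    have h := hcon (e₁ + e₂)
    rw [haddl, haddr, haddr, h11, h22, ← hydef] at h
    rw [zero_add, add_zero] at h
    exact eq_neg_of_add_eq_zero_right h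
  -- (p - cp) • y = 0
  have hsub : (p - cp) • y = 0 := by
    have h := hcon (p • e₁ + e₂)
    simp only [haddl, haddr, hsmull, hsmulr, h11, h22, h21, ← hydef, ← hcp, smul_zero,
      smul_neg, zero_add, add_zero] at h
    rw [sub_smul, sub_eq_add_neg]
    exact h
  have hp2 : (p * p) • y = 0 := by
    have : p * p = p * (p - cp) + p * cp := by ring
    rw [this, add_smul, mul_smul, hsub, smul_zero, zero_add, hΔ]
  have hq2 : (cp * cp) • y = 0 := by
    have : cp * cp = (-cp) * (p - cp) + p * cp := by ring
    rw [this, add_smul, mul_smul, hsub, smul_zero, zero_add, hΔ]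
  -- lift
  obtain ⟨z, hz⟩ := hπsurj y
  have hker : ∀ c : Λ, (c * c) • y = 0 → ∃ a : Λ, algebraMap Λ (FractionRing Λ) a = (c * c) • z := by
    intro c hcy
    have : (c * c) • z ∈ LinearMap.ker π := by
      rw [LinearMap.mem_ker, map_smul, hz, hcy]
    rw [hπker] at this
    obtain ⟨a, ha⟩ := this
    exact ⟨a, ha⟩
  obtain ⟨a, ha⟩ := hker p hp2
  obtain ⟨b, hb⟩ := hker cp hq2
  have hinj : Function.Injective (algebraMap Λ (FractionRing Λ)) :=
    IsFractionRing.injective Λ (FractionRing Λ)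
  have hsmulz : ∀ c : Λ, c • z = algebraMap Λ (FractionRing Λ) c * z := fun c =>
    Algebra.smul_def c z
  have key : a * (cp * cp) = b * (p * p) := by
    apply hinj
    simp only [map_mul, ha, hb, hsmulz]
    ring
  have hrp : IsRelPrime (p * p) (cp * cp) :=
    ((hcop.mul_right hcop).mul_left (hcop.mul_right hcop))
  have hdvd : (p * p) ∣ a := by
    apply hrp.dvd_of_dvd_mul_right
    exact ⟨b, by rw [key]; ring⟩
  obtain ⟨c, hc⟩ := hdvd
  have hpne : algebraMap Λ (FractionRing Λ) (p * p) ≠ 0 := by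
    simp only [ne_eq, map_eq_zero_iff _ hinj]
    exact mul_ne_zero hp.ne_zero hp.ne_zero
  have hzc : z = algebraMap Λ (FractionRing Λ) c := by
    apply mul_left_cancel₀ hpne
    rw [← map_mul, ← hc, ha, hsmulz]
  have : y = 0 := by
    rw [← hz, hzc]
    have : algebraMap Λ (FractionRing Λ) c ∈ LinearMap.ker π := by
      rw [hπker]
      exact ⟨c, rfl⟩
    exact this
  exact hy this
end

section
/- Let p ∈ ℤ[x_1,...,x_n] with n ≥ 2 and let P ∈ ℂ[z_0,...,z_n] denote its homogenization viewed over ℂ. If the system z_i · ∂P/∂z_i = 0 (i = 0,...,n) has only the trivial solution over ℂ, then for every positive integer k, p(x_1^k,...,x_n^k) is not a product of two non-constant polynomials in ℤ[x_1,...,x_n]. -/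
/-!
Suppose `p(x₁^k,…,xₙ^k) = f g` with `f`, `g` non-constant. Over `ℂ`, homogenizing gives
`P(z₀^k,…,zₙ^k) = F G` with `F`, `G` forms of positive degree in `n + 1 ≥ 3` variables. Two such
forms have a common zero `a ≠ 0`: otherwise, by the Nullstellensatz, `(F, G)` contains every form
of large degree, and counting dimensions of graded pieces in three variables gives a
contradiction. The chain rule `zᵢ ∂ᵢ(P(z^k)) = k (zᵢ ∂ᵢP)(z^k)`, together with
`∂ᵢ(F G)(a) = 0`, then makes `a^k` a nontrivial solution of the system `zᵢ ∂P/∂zᵢ = 0`.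
-/

open MvPolynomial Module

/-- The homogenization `P(z₀,…,zₙ) = z₀^{deg p} · p(z₁/z₀,…,zₙ/z₀)` of a polynomial
`p ∈ R[x₁,…,xₙ]`. -/
noncomputable def homogenize {R : Type*} [CommRing R] {n : ℕ}
    (p : MvPolynomial (Fin n) R) : MvPolynomial (Fin (n + 1)) R :=
  ∑ m ∈ p.support,
    monomial (Finsupp.single 0 (p.totalDegree - m.sum fun _ e => e) +
      m.mapDomain Fin.succ) (p.coeff m)

namespace MvPolynomial

section CommSemiring

variable {σ R : Type*} [CommSemiring R]

theorem IsHomogeneous.expand {P : MvPolynomial σ R} {D : ℕ} (hP : P.IsHomogeneous D) (k : ℕ) :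
    (expand k P).IsHomogeneous (k * D) := by
  classical
  intro d hd
  obtain ⟨m, hm, rfl⟩ :=
    Finset.mem_image.mp (support_expand_subset P (mem_support_iff.mpr hd))
  rw [map_nsmul, hP (mem_support_iff.mp hm), smul_eq_mul]

theorem X_mul_pderiv_expand (k : ℕ) (i : σ) (P : MvPolynomial σ R) :
    X i * pderiv i (expand k P) = (k : MvPolynomial σ R) * expand k (X i * pderiv i P) := by
  induction P using MvPolynomial.induction_on' with
  | add p q hp hq => simp only [map_add, mul_add, hp, hq]
  | monomial m c =>
    rw [expand_monomial, X_mul_pderiv_monomial, X_mul_pderiv_monomial, map_nsmul,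
      expand_monomial, Finsupp.smul_apply, smul_eq_mul, mul_smul, nsmul_eq_mul]

theorem totalDegree_map_of_injective {S : Type*} [CommSemiring S] {f : R →+* S}
    (hf : Function.Injective f) (p : MvPolynomial σ R) :
    (map f p).totalDegree = p.totalDegree := by
  simp only [totalDegree, support_map_of_injective _ hf]

instance [Finite σ] (m : ℕ) : Module.Finite R (homogeneousSubmodule σ R m) :=
  Module.Finite.iff_fg.mpr (homogeneousSubmodule_fg σ R m)

theorem homogeneousComponent_mul_of_isHomogeneous {G : MvPolynomial σ R} {a : ℕ}
    (hG : G.IsHomogeneous a) (u : MvPolynomial σ R) (i : ℕ) :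
    homogeneousComponent (i + a) (u * G) = homogeneousComponent i u * G := by
  classical
  conv_lhs => rw [← sum_homogeneousComponent u, Finset.sum_mul, map_sum]
  rw [Finset.sum_eq_single i]
  · rw [homogeneousComponent_of_mem ((homogeneousComponent_isHomogeneous i u).mul hG),
      if_pos rfl]
  · intro j _ hj
    rw [homogeneousComponent_of_mem ((homogeneousComponent_isHomogeneous j u).mul hG),
      if_neg (by omega)]
  · intro hi
    rw [homogeneousComponent_eq_zero i u (by simpa using hi), zero_mul, map_zero]

theorem IsHomogeneous.mem_of_X_pow_mem [Fintype σ] {I : Ideal (MvPolynomial σ R)} {N : ℕ}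
    (hX : ∀ i, X i ^ (N + 1) ∈ I) {w : MvPolynomial σ R} {d : ℕ} (hw : w.IsHomogeneous d)
    (hd : Fintype.card σ * N < d) : w ∈ I := by
  classical
  rw [w.as_sum]
  refine I.sum_mem fun m hm => ?_
  have hdeg : m.degree = d := by
    rw [Finsupp.degree_eq_weight_one]
    exact hw (mem_support_iff.mp hm)
  obtain ⟨i, hi⟩ : ∃ i, N + 1 ≤ m i := by
    by_contra! h
    have : m.degree ≤ Fintype.card σ * N :=
      calc m.degree = ∑ i, m i := Finsupp.degree_eq_sum m
        _ ≤ ∑ _i : σ, N := Finset.sum_le_sum fun i _ => Nat.lt_succ_iff.mp (h i)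
        _ = Fintype.card σ * N := by simp
    omega
  have hfactor : monomial m (coeff m w) =
      monomial (m - Finsupp.single i (N + 1)) (coeff m w) * X i ^ (N + 1) := by
    rw [X_pow_eq_monomial, monomial_mul, mul_one,
      tsub_add_cancel_of_le (Finsupp.single_le_iff.mpr hi)]
  rw [hfactor]
  exact I.mul_mem_left _ (hX i)

end CommSemiring

section Field

variable {σ K : Type*} [Field K]

theorem finrank_homogeneousSubmodule [Fintype σ] (m : ℕ) :
    finrank K (homogeneousSubmodule σ K m) = (Fintype.card σ + m - 1).choose m := by
  classical
  let b := (basisRestrictSupport K {d : σ →₀ ℕ | d.degree = m}).map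
    (LinearEquiv.ofEq _ _ (homogeneousSubmodule_eq_finsupp_supported σ K m).symm)
  rw [finrank_eq_nat_card_basis b, ← Finset.card_univ,
    ← Finset.card_finsuppAntidiag_nat_eq_choose, ← Nat.card_eq_finsetCard]
  congr
  ext d
  simp [Finsupp.degree_eq_sum]

/- `(u, v) ↦ u G + v H` maps `V (e + b) × V (e + a)` onto `V (e + a + b)`, and its kernel
contains the syzygies `(t H, -t G)` for `t ∈ V e`. -/
theorem finrank_homogeneousSubmodule_add_le [Finite σ] {G H : MvPolynomial σ K} {a b e : ℕ}
    (hG : G.IsHomogeneous a) (hH : H.IsHomogeneous b) (hGH : G ≠ 0 ∨ H ≠ 0)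
    (hspan : ∀ w : MvPolynomial σ K, w.IsHomogeneous (e + a + b) → w ∈ Ideal.span {G, H}) :
    finrank K (homogeneousSubmodule σ K (e + a + b)) + finrank K (homogeneousSubmodule σ K e) ≤
      finrank K (homogeneousSubmodule σ K (e + b)) +
        finrank K (homogeneousSubmodule σ K (e + a)) := by
  set V := homogeneousSubmodule σ K
  let Φ : V (e + b) × V (e + a) →ₗ[K] MvPolynomial σ K :=
    ((LinearMap.mulRight K G).comp (V (e + b)).subtype).coprod
      ((LinearMap.mulRight K H).comp (V (e + a)).subtype)
  have hrange : LinearMap.range Φ = V (e + a + b) := by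
    apply le_antisymm
    · rintro _ ⟨⟨u, v⟩, rfl⟩
      show u.1 * G + v.1 * H ∈ V (e + a + b)
      refine Submodule.add_mem _ ?_ (v.2.mul hH)
      rw [add_right_comm]
      exact u.2.mul hG
    · intro w hw
      obtain ⟨u, v, rfl⟩ := Ideal.mem_span_pair.mp (hspan w hw)
      refine ⟨(⟨homogeneousComponent (e + b) u, homogeneousComponent_mem _ _⟩,
        ⟨homogeneousComponent (e + a) v, homogeneousComponent_mem _ _⟩), ?_⟩
      have hcomp := homogeneousComponent_of_mem (m := e + a + b) (n := e + a + b) hw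
      rw [if_pos rfl, map_add, add_right_comm e a b,
        homogeneousComponent_mul_of_isHomogeneous hG, add_right_comm e b a,
        homogeneousComponent_mul_of_isHomogeneous hH] at hcomp
      simpa [Φ] using hcomp
  let Ψ : V e →ₗ[K] V (e + b) × V (e + a) :=
    ((LinearMap.mulRight K H).restrict fun t ht =>
        (mem_homogeneousSubmodule e t).mp ht |>.mul hH).prod
      (-(LinearMap.mulRight K G).restrict fun t ht =>
        (mem_homogeneousSubmodule e t).mp ht |>.mul hG)
  have hΨ : Function.Injective Ψ := by
    rw [← LinearMap.ker_eq_bot, LinearMap.ker_eq_bot']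
    intro t ht
    have htH : t.1 * H = 0 := congrArg (fun z => (z.1 : MvPolynomial σ K)) ht
    have htG : -(t.1 * G) = 0 := congrArg (fun z => (z.2 : MvPolynomial σ K)) ht
    ext1
    rcases hGH with hG0 | hH0
    · exact (mul_eq_zero.mp (neg_eq_zero.mp htG)).resolve_right hG0
    · exact (mul_eq_zero.mp htH).resolve_right hH0
  have hΨΦ : LinearMap.range Ψ ≤ LinearMap.ker Φ := by
    rintro _ ⟨t, rfl⟩
    change t.1 * H * G + -(t.1 * G) * H = 0
    ring
  have rank_nullity := LinearMap.finrank_range_add_finrank_ker Φ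
  rw [hrange, finrank_prod] at rank_nullity
  have := (LinearMap.finrank_range_of_inj hΨ).symm.trans_le (Submodule.finrank_mono hΨΦ)
  omega

theorem exists_ne_zero_eval_eq_zero_fin_three [IsAlgClosed K] {G H : MvPolynomial (Fin 3) K}
    {a b : ℕ} (ha : 0 < a) (hb : 0 < b) (hG : G.IsHomogeneous a) (hH : H.IsHomogeneous b) :
    ∃ x : Fin 3 → K, x ≠ 0 ∧ eval x G = 0 ∧ eval x H = 0 := by
  by_contra! hzero
  have hGH : G ≠ 0 ∨ H ≠ 0 := by
    by_contra! h
    exact hzero 1 one_ne_zero (by simp [h.1]) (by simp [h.2])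
  have hrad (i : Fin 3) : X i ∈ (Ideal.span {G, H}).radical := by
    rw [← vanishingIdeal_zeroLocus_eq_radical (K := K), mem_vanishingIdeal_iff]
    intro x hx
    rw [mem_zeroLocus_iff] at hx
    by_contra hxi
    exact hzero x (fun h => hxi (by simp [h])) (hx G (Ideal.subset_span (by simp)))
      (hx H (Ideal.subset_span (by simp)))
  choose M hM using hrad
  have hX (i : Fin 3) : X i ^ (∑ j, M j + 1) ∈ Ideal.span {G, H} :=
    Ideal.pow_mem_of_pow_mem _ (hM i)
      ((Finset.single_le_sum (fun j _ => Nat.zero_le (M j)) (Finset.mem_univ i)).trans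
        (Nat.le_succ _))
  have key := finrank_homogeneousSubmodule_add_le (e := 3 * ∑ j, M j) hG hH hGH
    fun w hw => hw.mem_of_X_pow_mem hX (by rw [Fintype.card_fin]; omega)
  -- `dim V m = (m + 2)(m + 1)/2` has mixed second difference `a b > 0`, contradicting `key`.
  have hdim (m : ℕ) : (finrank K (homogeneousSubmodule (Fin 3) K m) : ℚ) =
      (m + 2) * (m + 1) / 2 := by
    rw [finrank_homogeneousSubmodule, Fintype.card_fin, show 3 + m - 1 = m + 2 by omega,
      Nat.choose_symm_add, Nat.cast_choose_two]
    push_cast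
    ring
  have := (Nat.cast_le (α := ℚ)).mpr key
  push_cast [hdim] at this
  nlinarith [mul_pos (Nat.cast_pos.mpr ha : (0 : ℚ) < a) (Nat.cast_pos.mpr hb : (0 : ℚ) < b)]

theorem exists_ne_zero_eval_eq_zero_of_isHomogeneous [IsAlgClosed K] [Fintype σ]
    (hσ : 3 ≤ Fintype.card σ) {G H : MvPolynomial σ K} {a b : ℕ} (ha : 0 < a) (hb : 0 < b)
    (hG : G.IsHomogeneous a) (hH : H.IsHomogeneous b) :
    ∃ x : σ → K, x ≠ 0 ∧ eval x G = 0 ∧ eval x H = 0 := by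
  obtain ⟨e⟩ : Nonempty (Fin 3 ↪ σ) :=
    Function.Embedding.nonempty_of_card_le (by rwa [Fintype.card_fin])
  have hf : (Function.invFun e).Surjective := Function.invFun_surjective e.injective
  obtain ⟨w, hw, hwG, hwH⟩ := exists_ne_zero_eval_eq_zero_fin_three ha hb
    (hG.rename_isHomogeneous (f := Function.invFun e)) hH.rename_isHomogeneous
  refine ⟨w ∘ Function.invFun e, fun h => hw ?_, by rwa [eval_rename] at hwG,
    by rwa [eval_rename] at hwH⟩
  funext j
  obtain ⟨s, rfl⟩ := hf j
  exact congrFun h s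

end Field

end MvPolynomial

section Homogenize

variable {R : Type*} [CommRing R] {n : ℕ}

noncomputable def dehomogenize : MvPolynomial (Fin (n + 1)) R →ₐ[R] MvPolynomial (Fin n) R :=
  aeval (Fin.cases 1 X)

theorem isHomogeneous_homogenize (p : MvPolynomial (Fin n) R) :
    (homogenize p).IsHomogeneous p.totalDegree := by
  refine IsHomogeneous.sum _ _ _ fun m hm => isHomogeneous_monomial _ ?_
  rw [map_add, Finsupp.degree_single, Finsupp.degree_mapDomain, Finsupp.degree_apply]
  exact Nat.sub_add_cancel (le_totalDegree hm)

theorem dehomogenize_homogenize (p : MvPolynomial (Fin n) R) :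
    dehomogenize (homogenize p) = p := by
  conv_rhs => rw [p.as_sum]
  rw [homogenize, map_sum]
  refine Finset.sum_congr rfl fun m _ => ?_
  rw [dehomogenize, aeval_monomial, monomial_eq,
    Finsupp.prod_add_index (by simp) (fun _ _ _ _ => pow_add _ _ _),
    Finsupp.prod_single_index (by simp),
    Finsupp.prod_mapDomain_index_inj (Fin.succ_injective _)]
  simp [algebraMap_eq]

theorem dehomogenize_expand (k : ℕ) (F : MvPolynomial (Fin (n + 1)) R) :
    dehomogenize (expand k F) = expand k (dehomogenize F) := by
  rw [dehomogenize, aeval_expand, ← AlgHom.comp_apply, comp_aeval]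
  congr 1
  ext i : 1
  cases i using Fin.cases <;> simp

theorem coeff_tail_dehomogenize {D : ℕ} {F : MvPolynomial (Fin (n + 1)) R}
    (hF : F.IsHomogeneous D) {m : Fin (n + 1) →₀ ℕ} (hm : m.degree = D) :
    (dehomogenize F).coeff m.tail = F.coeff m := by
  classical
  have degree_eq (m : Fin (n + 1) →₀ ℕ) : m.degree = m 0 + m.tail.degree := by
    simp [Finsupp.degree_eq_sum, Fin.sum_univ_succ, Finsupp.tail_apply]
  have hsum : dehomogenize F = ∑ m' ∈ F.support, monomial m'.tail (F.coeff m') := by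
    conv_lhs => rw [F.as_sum, map_sum]
    refine Finset.sum_congr rfl fun m' _ => ?_
    rw [dehomogenize, aeval_monomial, monomial_eq, algebraMap_eq,
      Finsupp.prod_fintype _ _ (by simp), Finsupp.prod_fintype _ _ (by simp),
      Fin.prod_univ_succ]
    simp [Finsupp.tail_apply]
  rw [hsum, coeff_sum]
  simp only [coeff_monomial]
  rw [Finset.sum_eq_single m (fun m' hm' hne => if_neg fun htail => hne ?_) (by simp_all)]
  · simp
  -- two monomials of the same degree with the same tail agree in the exponent of `z₀`
  have hd : m'.degree = D := by
    rw [Finsupp.degree_eq_weight_one]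
    exact hF (mem_support_iff.mp hm')
  rw [degree_eq, htail] at hd
  rw [degree_eq] at hm
  rw [← Finsupp.cons_tail m', ← Finsupp.cons_tail m, htail]
  congr 1
  omega

theorem MvPolynomial.IsHomogeneous.eq_of_dehomogenize_eq {D : ℕ}
    {F G : MvPolynomial (Fin (n + 1)) R} (hF : F.IsHomogeneous D) (hG : G.IsHomogeneous D)
    (h : dehomogenize F = dehomogenize G) : F = G := by
  ext m
  by_cases hm : m.degree = D
  · rw [← coeff_tail_dehomogenize hF hm, ← coeff_tail_dehomogenize hG hm, h]
  · rw [hF.coeff_eq_zero hm, hG.coeff_eq_zero hm]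

end Homogenize

theorem exists_ne_zero_X_mul_pderiv_homogenize_eq_zero {K : Type*} [Field K] [IsAlgClosed K]
    [CharZero K] {n : ℕ} (hn : 2 ≤ n) {p f g : MvPolynomial (Fin n) K} {k : ℕ} (hk : 0 < k)
    (hfg : expand k p = f * g) (hf : 0 < f.totalDegree) (hg : 0 < g.totalDegree) :
    ∃ x : Fin (n + 1) → K, x ≠ 0 ∧ ∀ i, x i * eval x (pderiv i (homogenize p)) = 0 := by
  have hf0 : f ≠ 0 := by rintro rfl; simp at hf
  have hg0 : g ≠ 0 := by rintro rfl; simp at hg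
  have hfactor : expand k (homogenize p) = homogenize f * homogenize g := by
    refine ((isHomogeneous_homogenize p).expand k).eq_of_dehomogenize_eq ?_ ?_
    · convert (isHomogeneous_homogenize f).mul (isHomogeneous_homogenize g) using 1
      rw [← totalDegree_mul_of_isDomain hf0 hg0, ← hfg, totalDegree_expand, mul_comm]
    · rw [dehomogenize_expand, map_mul, dehomogenize_homogenize, dehomogenize_homogenize,
        dehomogenize_homogenize, hfg]
  obtain ⟨a, ha, hfa, hga⟩ := exists_ne_zero_eval_eq_zero_of_isHomogeneous
    (by rw [Fintype.card_fin]; omega) hf hg (isHomogeneous_homogenize f)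
    (isHomogeneous_homogenize g)
  refine ⟨a ^ k, fun h => ha ?_, fun i => ?_⟩
  · funext j
    exact (pow_eq_zero_iff hk.ne').mp (congrFun h j)
  · have chain := congrArg (eval a) (X_mul_pderiv_expand k i (homogenize p))
    rw [hfactor, pderiv_mul] at chain
    simp only [map_mul, map_add, eval_expand, hfa, hga, mul_zero, zero_mul, add_zero,
      map_natCast, eval_X] at chain
    exact (mul_eq_zero.mp chain.symm).resolve_left (Nat.cast_ne_zero.mpr hk.ne')

/-- Let `p ∈ ℤ[x₁,…,xₙ]` with `n ≥ 2` and let `P ∈ ℂ[z₀,…,zₙ]` be its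
homogenization viewed over `ℂ`.  If the system `zᵢ · ∂P/∂zᵢ = 0` (`i = 0,…,n`) has only
the trivial solution over `ℂ`, then for every positive integer `k`, the polynomial
`p(x₁^k,…,xₙ^k)` is not a product of two non-constant polynomials in `ℤ[x₁,…,xₙ]`. -/
theorem stmt18 {n : ℕ} (hn : 2 ≤ n) (p : MvPolynomial (Fin n) ℤ)
    (heuler : ∀ x : Fin (n + 1) → ℂ,
      (∀ i, x i * eval x (pderiv i (homogenize
        (MvPolynomial.map (Int.castRingHom ℂ) p))) = 0) → x = 0) :
    ∀ k : ℕ, 0 < k →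
      ¬ ∃ f g : MvPolynomial (Fin n) ℤ,
        aeval (fun i => (X i : MvPolynomial (Fin n) ℤ) ^ k) p = f * g ∧
          0 < f.totalDegree ∧ 0 < g.totalDegree := by
  rintro k hk ⟨f, g, hfg, hf, hg⟩
  have hinj : Function.Injective (Int.castRingHom ℂ) := Int.cast_injective
  obtain ⟨x, hx, hxeuler⟩ := exists_ne_zero_X_mul_pderiv_homogenize_eq_zero hn hk
    (p := map (Int.castRingHom ℂ) p) (f := map (Int.castRingHom ℂ) f)
    (g := map (Int.castRingHom ℂ) g)
    (by rw [← map_expand, expand, ← aeval_eq_bind₁, hfg, map_mul])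
    (by rwa [totalDegree_map_of_injective hinj])
    (by rwa [totalDegree_map_of_injective hinj])
  exact hx (heuler x hxeuler)
end
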